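/- arXiv:2005.01788 — 2 statements merged into one kernel-verified Lean document; each statement's English description precedes it below -/
import Mathlib

section
/- For all real numbers p with p ≥ 2 and all vectors u, v in ℝ^N, the inequality ⟨|u|^{p-2}u − |v|^{p-2}v, u − v⟩ ≥ 4^{1-p} |u − v|^p holds (Simon's inequality, case p ≥ 2). -/
open scoped RealInnerProductSpace

set_option maxHeartbeats 1000000 in
/-- Simon's inequality, case `p ≥ 2`. -/
theorem simon_inequality_p_ge_two
    (N : ℕ) (p : ℝ) (hp : 2 ≤ p) (u v : EuclideanSpace ℝ (Fin N)) :
    ⟪(‖u‖ ^ (p - 2)) • u - (‖v‖ ^ (p - 2)) • v, u - v⟫ ≥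
      (4 : ℝ) ^ (1 - p) * ‖u - v‖ ^ p := by
  set a := ‖u‖ with ha_def
  set b := ‖v‖ with hb_def
  set d := ‖u - v‖ with hd_def
  have ha : (0:ℝ) ≤ a := norm_nonneg _
  have hb : (0:ℝ) ≤ b := norm_nonneg _
  have hd0 : (0:ℝ) ≤ d := norm_nonneg _
  have hpm2 : (0:ℝ) ≤ p - 2 := by linarith
  set A := a ^ (p - 2) with hA_def
  set B := b ^ (p - 2) with hB_def
  have hA : (0:ℝ) ≤ A := Real.rpow_nonneg ha _
  have hB : (0:ℝ) ≤ B := Real.rpow_nonneg hb _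
  set t := ⟪u, v⟫ with ht_def
  have expand1 : ⟪(A) • u - (B) • v, u - v⟫ = A * a ^ 2 + B * b ^ 2 - (A + B) * t := by
    have hsymm : ⟪v, u⟫ = t := (real_inner_comm v u).symm
    simp only [inner_sub_left, inner_sub_right, real_inner_smul_left,
      real_inner_self_eq_norm_sq, ← ha_def, ← hb_def, ← ht_def, hsymm]
    ring
  have expand2 : d ^ 2 = a ^ 2 + b ^ 2 - 2 * t := by
    rw [hd_def, ha_def, hb_def, ht_def, @norm_sub_sq_real]; ring
  -- monotonicity term
  have hmono : (A - B) * (a ^ 2 - b ^ 2) ≥ 0 := by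
    rcases le_total a b with h | h
    · have h1 : A ≤ B := Real.rpow_le_rpow ha h hpm2
      have h2 : a ^ 2 ≤ b ^ 2 := by nlinarith
      nlinarith
    · have h1 : B ≤ A := Real.rpow_le_rpow hb h hpm2
      have h2 : b ^ 2 ≤ a ^ 2 := by nlinarith
      nlinarith
  have key1 : ⟪(A) • u - (B) • v, u - v⟫ ≥ (1/2) * (A + B) * d ^ 2 := by
    rw [expand1, expand2]; nlinarith
  by_cases hd : d = 0
  · have hp0 : p ≠ 0 := by linarith
    rw [hd, Real.zero_rpow hp0, mul_zero]
    have := key1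
    rw [hd] at this
    simpa using this
  · have hdpos : 0 < d := lt_of_le_of_ne hd0 (Ne.symm hd)
    -- d^(p-2) ≤ 2^(p-2) * (A + B)
    have h1 : d ≤ a + b := norm_sub_le u v
    have h2 : d ^ (p - 2) ≤ (a + b) ^ (p - 2) := Real.rpow_le_rpow hd0 h1 hpm2
    have h3 : a + b ≤ 2 * max a b := by
      rcases le_total a b with h | h
      · simp [max_eq_right h]; linarith
      · simp [max_eq_left h]; linarith
    have hmax : (0:ℝ) ≤ max a b := le_trans ha (le_max_left _ _)
    have h4 : (a + b) ^ (p - 2) ≤ (2 * max a b) ^ (p - 2) :=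
      Real.rpow_le_rpow (by linarith) h3 hpm2
    have h5 : (2 * max a b) ^ (p - 2) = 2 ^ (p - 2) * (max a b) ^ (p - 2) :=
      Real.mul_rpow (by norm_num) hmax
    have h6 : (max a b) ^ (p - 2) ≤ A + B := by
      rcases le_total a b with h | h
      · rw [max_eq_right h]; rw [hB_def]; linarith
      · rw [max_eq_left h]; rw [hA_def]; linarith
    have h7 : d ^ (p - 2) ≤ 2 ^ (p - 2) * (A + B) := by
      calc d ^ (p - 2) ≤ (2 * max a b) ^ (p - 2) := le_trans h2 h4
        _ = 2 ^ (p - 2) * (max a b) ^ (p - 2) := h5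
        _ ≤ 2 ^ (p - 2) * (A + B) := by
            apply mul_le_mul_of_nonneg_left h6 (Real.rpow_nonneg (by norm_num) _)
    -- 4^(1-p) * 2^(p-2) ≤ 1/4
    have h8 : (4:ℝ) ^ (1 - p) * 2 ^ (p - 2) ≤ 1/4 := by
      have h42 : (4:ℝ) = (2:ℝ) ^ (2:ℝ) := by
        rw [show (2:ℝ) = ((2:ℕ):ℝ) from by norm_num, Real.rpow_natCast]; norm_num
      have e4 : (4:ℝ) ^ (1 - p) = 2 ^ (2 * (1 - p)) := by
        rw [h42, ← Real.rpow_mul (by norm_num)]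
      rw [e4, ← Real.rpow_add (by norm_num : (0:ℝ) < 2)]
      have : 2 * (1 - p) + (p - 2) = -p := by ring
      rw [this]
      have h2p : (2:ℝ) ^ (-p) ≤ 2 ^ (-2 : ℝ) :=
        Real.rpow_le_rpow_of_exponent_le one_le_two (by linarith)
      have e2 : (2:ℝ) ^ (-2 : ℝ) = 1/4 := by
        rw [Real.rpow_neg (by norm_num), h42.symm]; norm_num
      rw [e2] at h2p
      exact h2p
    have hdp : d ^ p = d ^ (p - 2) * d ^ 2 := by
      rw [← Real.rpow_natCast d 2, ← Real.rpow_add hdpos]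
      norm_num
    have h4p : (0:ℝ) ≤ (4:ℝ) ^ (1 - p) := Real.rpow_nonneg (by norm_num) _
    have hdpm : (0:ℝ) ≤ d ^ (p - 2) := Real.rpow_nonneg hd0 _
    have hd2 : (0:ℝ) ≤ d ^ 2 := sq_nonneg d
    have h9 : (4:ℝ) ^ (1 - p) * d ^ p ≤ (1/2) * (A + B) * d ^ 2 := by
      rw [hdp]
      have hstep : (4:ℝ) ^ (1 - p) * d ^ (p - 2) ≤ (1/4) * (A + B) := by
        calc (4:ℝ) ^ (1 - p) * d ^ (p - 2)
            ≤ (4:ℝ) ^ (1 - p) * (2 ^ (p - 2) * (A + B)) :=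
              mul_le_mul_of_nonneg_left h7 h4p
          _ = ((4:ℝ) ^ (1 - p) * 2 ^ (p - 2)) * (A + B) := by ring
          _ ≤ (1/4) * (A + B) := mul_le_mul_of_nonneg_right h8 (by linarith)
      calc (4:ℝ) ^ (1 - p) * (d ^ (p - 2) * d ^ 2)
          = ((4:ℝ) ^ (1 - p) * d ^ (p - 2)) * d ^ 2 := by ring
        _ ≤ ((1/4) * (A + B)) * d ^ 2 := mul_le_mul_of_nonneg_right hstep hd2
        _ ≤ (1/2) * (A + B) * d ^ 2 := mul_le_mul_of_nonneg_right (by linarith) hd2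
    exact le_trans h9 key1
end

section
/- For all real numbers p with 1 < p < 2 and all vectors u, v in ℝ^N with (u,v) ≠ (0,0), there exists a constant c > 0 depending only on p such that ⟨|u|^{p-2}u − |v|^{p-2}v, u − v⟩ ≥ c (|u| + |v|)^{p-2} |u − v|² (Simon's inequality, case 1 < p < 2). -/
open scoped RealInnerProductSpace

private lemma simon_oneD (p : ℝ) (hp1 : 1 < p) (hp2 : p < 2) (a b : ℝ)
    (hb : 0 ≤ b) (hba : b < a) :
    (p - 1) * (a + b) ^ (p - 2) * (a - b) ≤ a ^ (p - 1) - b ^ (p - 1) := by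
  obtain ⟨ξ, hξ, hder⟩ := exists_hasDerivAt_eq_slope (fun x : ℝ => x ^ (p - 1))
    (fun x : ℝ => (p - 1) * x ^ (p - 2)) hba
    (fun x hx => (Real.continuousAt_rpow_const x (p - 1)
      (Or.inr (by linarith))).continuousWithinAt)
    (fun x hx => by
      have hx0 : x ≠ 0 := by
        have : 0 < x := lt_of_le_of_lt hb hx.1
        exact this.ne'
      have := Real.hasDerivAt_rpow_const (p := p - 1) (x := x) (Or.inl hx0)
      simpa [show p - 1 - 1 = p - 2 by ring] using this)
  have hξ0 : 0 < ξ := lt_of_le_of_lt hb hξ.1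
  have hξab : ξ ≤ a + b := by cases hξ; linarith
  have hmono : (a + b) ^ (p - 2) ≤ ξ ^ (p - 2) :=
    Real.rpow_le_rpow_of_nonpos hξ0 hξab (by linarith)
  have h2 : 0 < a - b := by linarith
  have hslope : a ^ (p - 1) - b ^ (p - 1) = (p - 1) * ξ ^ (p - 2) * (a - b) := by
    rw [hder]
    field_simp
  rw [hslope]
  have h1 : 0 < p - 1 := by linarith
  have := mul_le_mul_of_nonneg_right (mul_le_mul_of_nonneg_left hmono h1.le) h2.le
  linarith

private lemma simon_core (p : ℝ) (hp1 : 1 < p) (hp2 : p < 2)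
    (N : ℕ) (u v : EuclideanSpace ℝ (Fin N)) (hne : ¬(u = 0 ∧ v = 0))
    (hba : ‖v‖ ≤ ‖u‖) :
    ⟪(‖u‖ ^ (p - 2)) • u - (‖v‖ ^ (p - 2)) • v, u - v⟫ ≥
      (p - 1) * (‖u‖ + ‖v‖) ^ (p - 2) * ‖u - v‖ ^ 2 := by
  set a := ‖u‖ with ha_def
  set b := ‖v‖ with hb_def
  have hb : (0:ℝ) ≤ b := norm_nonneg v
  have hexpand : ⟪(a ^ (p - 2)) • u - (b ^ (p - 2)) • v, u - v⟫ =
      a ^ (p - 2) * a ^ 2 + b ^ (p - 2) * b ^ 2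
        - (a ^ (p - 2) + b ^ (p - 2)) * ⟪u, v⟫ := by
    simp only [inner_sub_left, inner_sub_right, real_inner_smul_left,
      real_inner_self_eq_norm_sq, real_inner_comm v u]
    ring
  have hnormsub : ‖u - v‖ ^ 2 = a ^ 2 - 2 * ⟪u, v⟫ + b ^ 2 := norm_sub_sq_real u v
  have ht : ⟪u, v⟫ ≤ a * b := real_inner_le_norm u v
  rcases eq_or_lt_of_le hb with hb0 | hb0
  · -- b = 0, so v = 0
    have hv : v = 0 := norm_eq_zero.mp hb0.symm
    have hu : u ≠ 0 := fun h => hne ⟨h, hv⟩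
    have ha0 : 0 < a := by simpa [ha_def] using norm_pos_iff.mpr hu
    have htv : ⟪u, v⟫ = 0 := by simp [hv]
    rw [ge_iff_le, hexpand, hnormsub, htv, ← hb0]
    have hX : 0 < a ^ (p - 2) := Real.rpow_pos_of_pos ha0 _
    have hz : (0:ℝ) ^ (p - 2) = 0 := Real.zero_rpow (by intro h; linarith [h])
    rw [hz]
    have ha2 : 0 < a ^ 2 := by positivity
    rw [add_zero]
    nlinarith [mul_pos hX ha2]
  · -- 0 < b ≤ a
    have ha0 : 0 < a := lt_of_lt_of_le hb0 hba
    set X := a ^ (p - 2) with hX_def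
    set Y := b ^ (p - 2) with hY_def
    set Z := (a + b) ^ (p - 2) with hZ_def
    have hX : 0 < X := Real.rpow_pos_of_pos ha0 _
    have hY : 0 < Y := Real.rpow_pos_of_pos hb0 _
    have hZ : 0 < Z := Real.rpow_pos_of_pos (by linarith) _
    have hZX : Z ≤ X := Real.rpow_le_rpow_of_nonpos ha0 (by linarith) (by linarith)
    have hZY : Z ≤ Y := Real.rpow_le_rpow_of_nonpos hb0 (by linarith) (by linarith)
    have haX : a ^ (p - 1) = X * a := by
      rw [hX_def, ← Real.rpow_add_one ha0.ne' (p - 2)]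
      congr 1
      ring
    have hbY : b ^ (p - 1) = Y * b := by
      rw [hY_def, ← Real.rpow_add_one hb0.ne' (p - 2)]
      congr 1
      ring
    have key2 : (p - 1) * Z * (a - b) ^ 2 ≤ (X * a - Y * b) * (a - b) := by
      rcases eq_or_lt_of_le hba with heq | hlt
      · rw [heq]; ring_nf; simp
      · have h1 := simon_oneD p hp1 hp2 a b hb hlt
        rw [haX, hbY] at h1
        nlinarith [h1, sub_nonneg.mpr hlt.le]
    rw [ge_iff_le, hexpand, hnormsub]
    have hab_t : 0 ≤ a * b - ⟪u, v⟫ := by linarith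
    have hcoef : 0 ≤ X + Y - 2 * (p - 1) * Z := by nlinarith
    nlinarith [key2, mul_nonneg hab_t hcoef]

/-- Simon's inequality, case `1 < p < 2`. -/
theorem simon_inequality_p_lt_two
    (p : ℝ) (hp1 : 1 < p) (hp2 : p < 2) :
    ∃ c : ℝ, 0 < c ∧
      ∀ (N : ℕ) (u v : EuclideanSpace ℝ (Fin N)), (u, v) ≠ (0, 0) →
        ⟪(‖u‖ ^ (p - 2)) • u - (‖v‖ ^ (p - 2)) • v, u - v⟫ ≥
          c * (‖u‖ + ‖v‖) ^ (p - 2) * ‖u - v‖ ^ 2 := by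
  refine ⟨p - 1, by linarith, fun N u v hne => ?_⟩
  have hne' : ¬(u = 0 ∧ v = 0) := by
    rintro ⟨h1, h2⟩; exact hne (by simp [h1, h2])
  rcases le_total ‖v‖ ‖u‖ with h | h
  · exact simon_core p hp1 hp2 N u v hne' h
  · have := simon_core p hp1 hp2 N v u (fun ⟨h1, h2⟩ => hne' ⟨h2, h1⟩) h
    have heq : ⟪(‖v‖ ^ (p - 2)) • v - (‖u‖ ^ (p - 2)) • u, v - u⟫
        = ⟪(‖u‖ ^ (p - 2)) • u - (‖v‖ ^ (p - 2)) • v, u - v⟫ := by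
      rw [← inner_neg_neg]
      simp [neg_sub]
    rw [heq, norm_sub_rev v u, add_comm ‖v‖ ‖u‖] at this
    exact this
end
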